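/- With a₁ = 1 and a_k = (1/2)·√(√(9^{k+1} − 34·3^k + 25) − 3^k + 5) for k ≥ 2, the sequence is nonresonant up to order 4: for every nonzero integer vector (n₁,…,n_m) with Σ|n_i| ≤ 4 (any m), one has Σ_i n_i · a_i ≠ 0. In particular a_{k₂} ≠ 3a_{k₁}; a_{k₃} ≠ a_{k₂} + 2a_{k₁}; a_{k₃} ≠ 2a_{k₂} ± a_{k₁}; and a_{k₄} ≠ a_{k₃} + a_{k₂} + a_{k₁}, for all admissible index tuples with k₁ < k₂ < k₃ < k₄. -/

import Mathlib

/-!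
Write `bₖ = 2 aₖ`. For `k ≥ 2` the nested radicals give `2·3ᵏ - 1 < bₖ² < 2·3ᵏ - 2/3`, so `bₖ`
lies less than `1/8` below `cₖ = √(2·3ᵏ)`, and `c_{k+1} = √3 cₖ`: the frequencies grow
geometrically with ratio about `√3`.

In a combination of weight at most `4`, a top coefficient of absolute value at least `2`
dominates the rest. If the top coefficient is `±1`, the lower part has weight at most `3`, and up
to sign and cases settled by monotonicity only the relations `aⱼ = 2aᵢ`, `aⱼ = 3aᵢ`,
`aₖ = aⱼ + aᵢ`, `aₖ = 2aⱼ ± aᵢ`, `aₖ = aⱼ + 2aᵢ` and `aₗ = aₖ + aⱼ + aᵢ` remain. Each is refuted by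
comparing both sides with the `cₖ`, splitting on the gaps between the indices; only `a_{i+2} = 3aᵢ`
and the index tuples `(1, 3, 4)` and `(1, 3, 4, 5)` need the exact squares.
-/

open scoped BigOperators

/-- The limiting normalized frequencies at the Euler–Moulton relative equilibrium. -/
noncomputable def aseq (k : ℕ) : ℝ :=
  if k ≤ 1 then 1
  else (1 / 2) * Real.sqrt
    (Real.sqrt ((9 : ℝ) ^ (k + 1) - 34 * 3 ^ k + 25) - 3 ^ k + 5)

open Real

lemma aseq_of_le_one {k : ℕ} (hk : k ≤ 1) : aseq k = 1 := if_pos hk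

lemma nine_le_three_pow {k : ℕ} (hk : 2 ≤ k) : (9 : ℝ) ≤ 3 ^ k :=
  calc (9 : ℝ) = 3 ^ 2 := by norm_num
    _ ≤ 3 ^ k := pow_le_pow_right₀ (by norm_num) hk

lemma sqrt_quadratic_sub_mem_Ioo {x : ℝ} (hx : 9 ≤ x) :
    √(9 * x ^ 2 - 34 * x + 25) - x + 5 ∈ Set.Ioo (2 * x - 1) (2 * x - 2 / 3) := by
  have hlo : 3 * x - 6 < √(9 * x ^ 2 - 34 * x + 25) :=
    (lt_sqrt (by linarith)).mpr (by nlinarith)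
  -- `(3x - 17/3)²` exceeds the radicand by `64/9`
  have hhi : √(9 * x ^ 2 - 34 * x + 25) < 3 * x - 17 / 3 :=
    (sqrt_lt' (by linarith)).mpr (by nlinarith)
  constructor <;> linarith

lemma sq_two_mul_aseq {k : ℕ} (hk : 2 ≤ k) :
    (2 * aseq k) ^ 2 = √(9 * ((3 : ℝ) ^ k) ^ 2 - 34 * 3 ^ k + 25) - 3 ^ k + 5 := by
  have h9 : (9 : ℝ) ^ (k + 1) = 9 * ((3 : ℝ) ^ k) ^ 2 := by
    rw [pow_succ, mul_comm, ← pow_mul, mul_comm k 2, pow_mul]; norm_num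
  have hlo := (sqrt_quadratic_sub_mem_Ioo (nine_le_three_pow hk)).1
  rw [aseq, if_neg (by omega), h9, ← mul_assoc, mul_one_div_cancel two_ne_zero, one_mul,
    sq_sqrt (by linarith [nine_le_three_pow hk])]

lemma sq_two_mul_aseq_mem_Ioo {k : ℕ} (hk : 2 ≤ k) :
    (2 * aseq k) ^ 2 ∈ Set.Ioo (2 * 3 ^ k - 1) (2 * 3 ^ k - 2 / 3) := by
  rw [sq_two_mul_aseq hk]
  exact sqrt_quadratic_sub_mem_Ioo (nine_le_three_pow hk)

lemma aseq_nonneg (k : ℕ) : 0 ≤ aseq k := by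
  unfold aseq; split_ifs <;> positivity

noncomputable def aseqApprox (k : ℕ) : ℝ := √(2 * 3 ^ k)

lemma aseqApprox_sq (k : ℕ) : aseqApprox k ^ 2 = 2 * 3 ^ k := sq_sqrt (by positivity)

lemma aseqApprox_nonneg (k : ℕ) : 0 ≤ aseqApprox k := sqrt_nonneg _

lemma aseqApprox_mono : Monotone aseqApprox := fun _ _ h ↦
  sqrt_le_sqrt (by gcongr; norm_num)

lemma aseqApprox_succ (k : ℕ) : aseqApprox (k + 1) = √3 * aseqApprox k := by
  rw [aseqApprox, aseqApprox, ← sqrt_mul (by norm_num)]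
  ring_nf

lemma aseqApprox_add_two (k : ℕ) : aseqApprox (k + 2) = 3 * aseqApprox k := by
  rw [aseqApprox_succ, aseqApprox_succ, ← mul_assoc, mul_self_sqrt (by norm_num)]

lemma two_mul_aseq_lt_aseqApprox {k : ℕ} (hk : 1 ≤ k) : 2 * aseq k < aseqApprox k := by
  rcases hk.eq_or_lt with rfl | hk
  · rw [aseq_of_le_one le_rfl, aseqApprox]
    exact (lt_sqrt (by norm_num)).mpr (by norm_num)
  · refine lt_of_pow_lt_pow_left₀ 2 (aseqApprox_nonneg k) ?_
    rw [aseqApprox_sq]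
    linarith [(sq_two_mul_aseq_mem_Ioo hk).2]

lemma aseqApprox_two_lt : aseqApprox 2 < 4.2427 := (sqrt_lt' (by norm_num)).mpr (by norm_num)

lemma aseqApprox_three_lt : aseqApprox 3 < 7.3485 := (sqrt_lt' (by norm_num)).mpr (by norm_num)

lemma lt_aseqApprox_of_two_le {k : ℕ} (hk : 2 ≤ k) : 4.2426 < aseqApprox k :=
  ((lt_sqrt (by norm_num)).mpr (by norm_num)).trans_le (aseqApprox_mono hk)

lemma lt_aseqApprox_of_three_le {k : ℕ} (hk : 3 ≤ k) : 7.3484 < aseqApprox k :=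
  ((lt_sqrt (by norm_num)).mpr (by norm_num)).trans_le (aseqApprox_mono hk)

lemma lt_aseqApprox_of_four_le {k : ℕ} (hk : 4 ≤ k) : 12.7279 < aseqApprox k :=
  ((lt_sqrt (by norm_num)).mpr (by norm_num)).trans_le (aseqApprox_mono hk)

lemma lt_aseqApprox_of_five_le {k : ℕ} (hk : 5 ≤ k) : 22.0454 < aseqApprox k :=
  ((lt_sqrt (by norm_num)).mpr (by norm_num)).trans_le (aseqApprox_mono hk)

lemma aseqApprox_sub_lt_two_mul_aseq {k : ℕ} (hk : 2 ≤ k) :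
    aseqApprox k - 1 / 8 < 2 * aseq k := by
  have hc := lt_aseqApprox_of_two_le hk
  refine lt_of_pow_lt_pow_left₀ 2 (by linarith [aseq_nonneg k]) ?_
  nlinarith [(sq_two_mul_aseq_mem_Ioo hk).1, aseqApprox_sq k]

lemma one_le_aseq (k : ℕ) : 1 ≤ aseq k := by
  rcases le_or_gt k 1 with hk | hk
  · rw [aseq_of_le_one hk]
  · linarith [aseqApprox_sub_lt_two_mul_aseq hk, lt_aseqApprox_of_two_le hk]

lemma aseq_pos (k : ℕ) : 0 < aseq k := one_pos.trans_le (one_le_aseq k)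

lemma mul_aseqApprox_le_of_lt {i j : ℕ} (h : i < j) : 1.732 * aseqApprox i ≤ aseqApprox j := by
  have h3 : (1.732 : ℝ) < √3 := (lt_sqrt (by norm_num)).mpr (by norm_num)
  calc 1.732 * aseqApprox i ≤ √3 * aseqApprox i := by gcongr; exact aseqApprox_nonneg i
    _ = aseqApprox (i + 1) := (aseqApprox_succ i).symm
    _ ≤ aseqApprox j := aseqApprox_mono h

lemma aseqApprox_succ_le (i : ℕ) : aseqApprox (i + 1) ≤ 1.7321 * aseqApprox i := by
  rw [aseqApprox_succ]
  gcongr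
  · exact aseqApprox_nonneg i
  · exact ((sqrt_lt' (by norm_num)).mpr (by norm_num)).le

lemma three_mul_aseqApprox_le {i j : ℕ} (h : i + 2 ≤ j) : 3 * aseqApprox i ≤ aseqApprox j :=
  aseqApprox_add_two i ▸ aseqApprox_mono h

lemma mul_aseqApprox_le_of_add_three_le {i j : ℕ} (h : i + 3 ≤ j) :
    5.196 * aseqApprox i ≤ aseqApprox j := by
  have := mul_aseqApprox_le_of_lt (show i + 2 < j by omega)
  rw [aseqApprox_add_two] at this
  linarith [aseqApprox_nonneg i]

lemma aseqApprox_add_three_le (i : ℕ) : aseqApprox (i + 3) ≤ 5.1963 * aseqApprox i := by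
  rw [show i + 3 = i + 1 + 2 from rfl, aseqApprox_add_two]
  linarith [aseqApprox_succ_le i]

lemma nine_mul_aseqApprox_le {i j : ℕ} (h : i + 4 ≤ j) : 9 * aseqApprox i ≤ aseqApprox j := by
  have := three_mul_aseqApprox_le (show (i + 2) + 2 ≤ j by omega)
  rw [aseqApprox_add_two] at this
  linarith

lemma aseq_lt_aseq {i j : ℕ} (hi : 1 ≤ i) (hij : i < j) : aseq i < aseq j := by
  linarith [two_mul_aseq_lt_aseqApprox hi, aseqApprox_mono (show i ≤ j - 1 by omega),
    mul_aseqApprox_le_of_lt (show j - 1 < j by omega),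
    aseqApprox_sub_lt_two_mul_aseq (show 2 ≤ j by omega),
    lt_aseqApprox_of_two_le (show 2 ≤ j by omega)]

section

variable {i j k l : ℕ}

lemma aseq_ne_two_mul (hi : 1 ≤ i) (hij : i < j) : aseq j ≠ 2 * aseq i := by
  have hj_lo := aseqApprox_sub_lt_two_mul_aseq (show 2 ≤ j by omega)
  rcases hi.eq_or_lt with rfl | hi
  · rw [aseq_of_le_one le_rfl]
    linarith [lt_aseqApprox_of_two_le (show 2 ≤ j by omega)]
  rcases (show j = i + 1 ∨ i + 2 ≤ j by omega) with rfl | hij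
  · linarith [two_mul_aseq_lt_aseqApprox (show 1 ≤ i + 1 by omega), aseqApprox_succ_le i,
      aseqApprox_sub_lt_two_mul_aseq hi, lt_aseqApprox_of_two_le hi]
  · linarith [three_mul_aseqApprox_le hij, two_mul_aseq_lt_aseqApprox hi.le,
      lt_aseqApprox_of_two_le hi]

lemma aseq_ne_three_mul (hi : 1 ≤ i) (hij : i < j) : aseq j ≠ 3 * aseq i := by
  rcases hi.eq_or_lt with rfl | hi
  · rw [aseq_of_le_one le_rfl]
    rcases (show j = 2 ∨ 3 ≤ j by omega) with rfl | hj
    · linarith [two_mul_aseq_lt_aseqApprox (show 1 ≤ 2 by omega), aseqApprox_two_lt]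
    · linarith [aseqApprox_sub_lt_two_mul_aseq (show 2 ≤ j by omega),
        lt_aseqApprox_of_three_le hj]
  rcases (show j = i + 1 ∨ j = i + 2 ∨ i + 3 ≤ j by omega) with rfl | rfl | hij
  · linarith [two_mul_aseq_lt_aseqApprox (show 1 ≤ i + 1 by omega), aseqApprox_succ_le i,
      aseqApprox_sub_lt_two_mul_aseq hi, lt_aseqApprox_of_two_le hi]
  · -- `a_{i+2}` and `3 aᵢ` agree to leading order; the squares separate them:
    -- `(2 a_{i+2})² > 18·3ⁱ - 1 > 18·3ⁱ - 6 > (6 aᵢ)²`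
    have hj_sq := (sq_two_mul_aseq_mem_Ioo (show 2 ≤ i + 2 by omega)).1
    have hi_sq := (sq_two_mul_aseq_mem_Ioo hi).2
    have h9 : (3 : ℝ) ^ (i + 2) = 9 * 3 ^ i := by ring
    refine ne_of_gt (lt_of_pow_lt_pow_left₀ 2 (aseq_nonneg _) ?_)
    nlinarith
  · linarith [aseqApprox_sub_lt_two_mul_aseq (show 2 ≤ j by omega),
      mul_aseqApprox_le_of_add_three_le hij, two_mul_aseq_lt_aseqApprox hi.le,
      lt_aseqApprox_of_two_le hi]

lemma aseq_add_aseq_lt (hi : 1 ≤ i) (hij : i < j) (hjk : j < k) :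
    aseq i + aseq j < aseq k := by
  linarith [aseqApprox_sub_lt_two_mul_aseq (show 2 ≤ k by omega),
    two_mul_aseq_lt_aseqApprox (show 1 ≤ j by omega), two_mul_aseq_lt_aseqApprox hi,
    mul_aseqApprox_le_of_lt hjk, three_mul_aseqApprox_le (show i + 2 ≤ k by omega),
    lt_aseqApprox_of_three_le (show 3 ≤ k by omega), aseqApprox_nonneg i, aseqApprox_nonneg j]

lemma aseq_ne_two_mul_add (hi : 1 ≤ i) (hij : i < j) (hjk : j < k) :
    aseq k ≠ 2 * aseq j + aseq i := by
  rcases (show k = j + 1 ∨ j + 2 ≤ k by omega) with rfl | hjk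
  · linarith [two_mul_aseq_lt_aseqApprox (show 1 ≤ j + 1 by omega), aseqApprox_succ_le j,
      aseqApprox_sub_lt_two_mul_aseq (show 2 ≤ j by omega), one_le_aseq i,
      aseqApprox_nonneg j]
  · linarith [aseqApprox_sub_lt_two_mul_aseq (show 2 ≤ k by omega), three_mul_aseqApprox_le hjk,
      two_mul_aseq_lt_aseqApprox (show 1 ≤ j by omega), two_mul_aseq_lt_aseqApprox hi,
      mul_aseqApprox_le_of_lt hij, lt_aseqApprox_of_two_le (show 2 ≤ j by omega),
      aseqApprox_nonneg i]

lemma aseq_ne_add_two_mul (hi : 1 ≤ i) (hij : i < j) (hjk : j < k) :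
    aseq k ≠ aseq j + 2 * aseq i := by
  rcases (show k = j + 1 ∧ j = i + 1 ∨ j + 2 ≤ k ∨ i + 2 ≤ j by omega)
    with ⟨rfl, rfl⟩ | hjk | hij
  · have hk_up := two_mul_aseq_lt_aseqApprox (show 1 ≤ i + 1 + 1 by omega)
    have hj_lo := aseqApprox_sub_lt_two_mul_aseq (show 2 ≤ i + 1 by omega)
    rcases hi.eq_or_lt with rfl | hi
    · rw [aseq_of_le_one le_rfl]
      linarith [lt_aseqApprox_of_two_le le_rfl, aseqApprox_three_lt]
    · linarith [aseqApprox_succ_le (i + 1), aseqApprox_succ_le i,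
        aseqApprox_sub_lt_two_mul_aseq hi, lt_aseqApprox_of_three_le (show 3 ≤ i + 1 by omega)]
  · linarith [aseqApprox_sub_lt_two_mul_aseq (show 2 ≤ k by omega), three_mul_aseqApprox_le hjk,
      two_mul_aseq_lt_aseqApprox (show 1 ≤ j by omega), two_mul_aseq_lt_aseqApprox hi,
      mul_aseqApprox_le_of_lt hij, lt_aseqApprox_of_two_le (show 2 ≤ j by omega),
      aseqApprox_nonneg i]
  · linarith [aseqApprox_sub_lt_two_mul_aseq (show 2 ≤ k by omega), mul_aseqApprox_le_of_lt hjk,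
      two_mul_aseq_lt_aseqApprox (show 1 ≤ j by omega), two_mul_aseq_lt_aseqApprox hi,
      three_mul_aseqApprox_le hij, lt_aseqApprox_of_three_le (show 3 ≤ j by omega),
      aseqApprox_nonneg i]

lemma two_mul_aseq_bounds_small :
    2 * aseq 3 < 7.303 ∧ 12.688 < 2 * aseq 4 ∧ 2 * aseq 4 < 12.7018 ∧ 22.0227 < 2 * aseq 5 := by
  have h3 := (sq_two_mul_aseq_mem_Ioo (show 2 ≤ 3 by norm_num)).2
  have h4 := sq_two_mul_aseq_mem_Ioo (show 2 ≤ 4 by norm_num)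
  have h5 := (sq_two_mul_aseq_mem_Ioo (show 2 ≤ 5 by norm_num)).1
  norm_num at h3 h4 h5
  refine ⟨?_, ?_, ?_, ?_⟩ <;> nlinarith [aseq_pos 3, aseq_pos 4, aseq_pos 5]

lemma aseq_ne_two_mul_sub (hi : 1 ≤ i) (hij : i < j) (hjk : j < k) :
    aseq k ≠ 2 * aseq j - aseq i := by
  rcases (show j + 2 ≤ k ∨ k = j + 1 by omega) with hjk | rfl
  · linarith [aseqApprox_sub_lt_two_mul_aseq (show 2 ≤ k by omega), three_mul_aseqApprox_le hjk,
      two_mul_aseq_lt_aseqApprox (show 1 ≤ j by omega), aseq_pos i,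
      lt_aseqApprox_of_two_le (show 2 ≤ j by omega)]
  have hk_lo := aseqApprox_sub_lt_two_mul_aseq (show 2 ≤ j + 1 by omega)
  have hcjk := mul_aseqApprox_le_of_lt (show j < j + 1 by omega)
  have hj_up := two_mul_aseq_lt_aseqApprox (show 1 ≤ j by omega)
  rcases (show j = i + 1 ∨ j = i + 2 ∨ i + 3 ≤ j by omega) with rfl | rfl | hij
  · rcases hi.eq_or_lt with rfl | hi
    · rw [aseq_of_le_one le_rfl]
      linarith [aseqApprox_two_lt]
    · linarith [aseqApprox_sub_lt_two_mul_aseq hi, aseqApprox_succ_le i,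
        lt_aseqApprox_of_two_le hi]
  · rcases hi.eq_or_lt with rfl | hi
    · rw [aseq_of_le_one le_rfl]
      linarith [two_mul_aseq_bounds_small]
    · linarith [aseqApprox_sub_lt_two_mul_aseq hi, aseqApprox_add_two i,
        lt_aseqApprox_of_two_le hi]
  · linarith [two_mul_aseq_lt_aseqApprox (show 1 ≤ j + 1 by omega), aseqApprox_succ_le j,
      aseqApprox_sub_lt_two_mul_aseq (show 2 ≤ j by omega), two_mul_aseq_lt_aseqApprox hi,
      mul_aseqApprox_le_of_add_three_le hij, lt_aseqApprox_of_four_le (show 4 ≤ j by omega),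
      aseqApprox_nonneg i]

lemma aseq_ne_add_add (hi : 1 ≤ i) (hij : i < j) (hjk : j < k) (hkl : k < l) :
    aseq l ≠ aseq k + aseq j + aseq i := by
  have hi_up := two_mul_aseq_lt_aseqApprox hi
  have hj_up := two_mul_aseq_lt_aseqApprox (show 1 ≤ j by omega)
  have hk_up := two_mul_aseq_lt_aseqApprox (show 1 ≤ k by omega)
  have hl_lo := aseqApprox_sub_lt_two_mul_aseq (show 2 ≤ l by omega)
  have hcjk := mul_aseqApprox_le_of_lt hjk
  have hci := aseqApprox_nonneg i
  have hcj := aseqApprox_nonneg j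
  rcases (show k + 2 ≤ l ∨ l = k + 1 by omega) with hkl | rfl
  · linarith [three_mul_aseqApprox_le hkl, three_mul_aseqApprox_le (show i + 2 ≤ k by omega),
      lt_aseqApprox_of_three_le (show 3 ≤ k by omega)]
  have hl_up := two_mul_aseq_lt_aseqApprox (show 1 ≤ k + 1 by omega)
  have hckl_lo := mul_aseqApprox_le_of_lt (show k < k + 1 by omega)
  have hckl_up := aseqApprox_succ_le k
  rcases (show j + 2 ≤ k ∨ k = j + 1 by omega) with hjk | rfl
  · linarith [three_mul_aseqApprox_le hjk,
      mul_aseqApprox_le_of_add_three_le (show i + 3 ≤ k by omega),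
      lt_aseqApprox_of_three_le (show 3 ≤ k by omega)]
  have hk_lo := aseqApprox_sub_lt_two_mul_aseq (show 2 ≤ j + 1 by omega)
  have hj_lo := aseqApprox_sub_lt_two_mul_aseq (show 2 ≤ j by omega)
  have hcjk_up := aseqApprox_succ_le j
  rcases (show j = i + 1 ∨ j = i + 2 ∨ i + 3 ≤ j by omega) with rfl | rfl | hij
  · rcases hi.eq_or_lt with rfl | hi
    · rw [aseq_of_le_one le_rfl]
      linarith [aseqApprox_three_lt]
    · linarith [aseqApprox_sub_lt_two_mul_aseq hi, aseqApprox_add_two i,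
        lt_aseqApprox_of_four_le (show 4 ≤ i + 2 by omega)]
  · rcases hi.eq_or_lt with rfl | hi
    · rw [aseq_of_le_one le_rfl]
      linarith [two_mul_aseq_bounds_small]
    · linarith [aseqApprox_sub_lt_two_mul_aseq hi, aseqApprox_add_three_le i,
        lt_aseqApprox_of_five_le (show 5 ≤ i + 3 by omega)]
  · linarith [nine_mul_aseqApprox_le (show i + 4 ≤ j + 1 by omega),
      lt_aseqApprox_of_five_le (show 5 ≤ j + 1 by omega)]

lemma aseq_combination₂_ne_zero (hi : 1 ≤ i) (hij : i < j) {a : ℤ} (ha : a ≠ 0)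
    (hw : a.natAbs ≤ 3) : a * aseq i + aseq j ≠ 0 := by
  have hpos := aseq_pos i
  have hij' := aseq_lt_aseq hi hij
  obtain ⟨_, _⟩ : -3 ≤ a ∧ a ≤ 3 := by omega
  interval_cases a <;> first
    | omega
    | intro h; push_cast at h; first
      | linarith
      | exact aseq_ne_two_mul hi hij (by linarith)
      | exact aseq_ne_three_mul hi hij (by linarith)

lemma aseq_combination₃_ne_zero (hi : 1 ≤ i) (hij : i < j) (hjk : j < k) {a b : ℤ}
    (ha : a ≠ 0) (hb : b ≠ 0) (hw : a.natAbs + b.natAbs ≤ 3) :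
    a * aseq i + b * aseq j + aseq k ≠ 0 := by
  have hpos := aseq_pos i
  have hij' := aseq_lt_aseq hi hij
  have hjk' := aseq_lt_aseq (hi.trans hij.le) hjk
  have hsum := aseq_add_aseq_lt hi hij hjk
  obtain ⟨_, _, _, _⟩ : -2 ≤ a ∧ a ≤ 2 ∧ -2 ≤ b ∧ b ≤ 2 := by omega
  interval_cases a <;> interval_cases b <;> first
    | omega
    | intro h; push_cast at h; first
      | linarith
      | exact aseq_ne_two_mul_add hi hij hjk (by linarith)
      | exact aseq_ne_two_mul_sub hi hij hjk (by linarith)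
      | exact aseq_ne_add_two_mul hi hij hjk (by linarith)

lemma aseq_combination₄_ne_zero (hi : 1 ≤ i) (hij : i < j) (hjk : j < k)
    (hkl : k < l) {a b c : ℤ} (ha : a.natAbs = 1) (hb : b.natAbs = 1) (hc : c.natAbs = 1) :
    a * aseq i + b * aseq j + c * aseq k + aseq l ≠ 0 := by
  have hpos := aseq_pos i
  have hij' := aseq_lt_aseq hi hij
  have hjk' := aseq_lt_aseq (hi.trans hij.le) hjk
  have hkl' := aseq_lt_aseq (by omega) hkl
  have hsum := aseq_add_aseq_lt (hi.trans hij.le) hjk hkl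
  obtain rfl | rfl : a = 1 ∨ a = -1 := by omega
  all_goals obtain rfl | rfl : b = 1 ∨ b = -1 := by omega
  all_goals obtain rfl | rfl : c = 1 ∨ c = -1 := by omega
  all_goals intro h; push_cast at h; first
    | linarith
    | exact aseq_ne_add_add hi hij hjk hkl (by linarith)

end

lemma sum_int_mul_add_int_mul_ne_zero_of_two_le_natAbs {ι : Type*} (s : Finset ι) (n : ι → ℤ)
    (y : ι → ℝ) {m : ℤ} {x : ℝ} (hx : 0 < x) (hy : ∀ i ∈ s, 0 ≤ y i ∧ y i < x)
    (hm : 2 ≤ m.natAbs) (hw : ∑ i ∈ s, (n i).natAbs + m.natAbs ≤ 4) :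
    ∑ i ∈ s, n i * y i + m * x ≠ 0 := by
  have habs : ∀ z : ℤ, ((z.natAbs : ℕ) : ℝ) = |(z : ℝ)| := fun z ↦ by
    rw [Nat.cast_natAbs, Int.cast_abs]
  have hle : |∑ i ∈ s, n i * y i| ≤ ∑ i ∈ s, |(n i : ℝ)| * y i :=
    (Finset.abs_sum_le_sum_abs _ _).trans_eq
      (Finset.sum_congr rfl fun i hi ↦ by rw [abs_mul, abs_of_nonneg (hy i hi).1])
  have hlt : ∑ i ∈ s, |(n i : ℝ)| * y i < |(m : ℝ)| * x := by
    by_cases hn : ∀ i ∈ s, n i = 0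
    · rw [Finset.sum_eq_zero fun i hi ↦ by simp [hn i hi]]
      have : (2 : ℝ) ≤ |(m : ℝ)| := by rw [← habs]; exact_mod_cast hm
      positivity
    push Not at hn
    obtain ⟨i₀, hi₀, hni₀⟩ := hn
    have hw' : ∑ i ∈ s, |(n i : ℝ)| ≤ |(m : ℝ)| := by
      have : ((∑ i ∈ s, (n i).natAbs : ℕ) : ℝ) ≤ (m.natAbs : ℕ) := by exact_mod_cast (by omega)
      simpa only [Nat.cast_sum, habs] using this
    calc ∑ i ∈ s, |(n i : ℝ)| * y i < ∑ i ∈ s, |(n i : ℝ)| * x :=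
          Finset.sum_lt_sum (fun i hi ↦ by gcongr; exact (hy i hi).2.le)
            ⟨i₀, hi₀, mul_lt_mul_of_pos_left (hy i₀ hi₀).2 (by positivity)⟩
      _ ≤ |(m : ℝ)| * x := by rw [← Finset.sum_mul]; gcongr
  intro h
  have hsum : |∑ i ∈ s, n i * y i| = |(m : ℝ)| * x := by
    rw [eq_neg_of_add_eq_zero_left h, abs_neg, abs_mul, abs_of_pos hx]
  exact (hle.trans_lt hlt).ne hsum

lemma card_le_sum_natAbs {ι : Type*} (s : Finset ι) (m : ι → ℤ) (hm : ∀ i ∈ s, m i ≠ 0) :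
    s.card ≤ ∑ i ∈ s, (m i).natAbs := by
  simpa using s.card_nsmul_le_sum (fun i ↦ (m i).natAbs) 1 fun i hi ↦ Int.natAbs_pos.mpr (hm i hi)

lemma sum_int_mul_aseq_add_aseq_ne_zero {r : ℕ} (idx : Fin (r + 1) → ℕ) (hidx : StrictMono idx)
    (hone : 1 ≤ idx 0) (m : Fin r → ℤ) (hm : ∀ j, m j ≠ 0) (hw : ∑ j, (m j).natAbs ≤ 3) :
    ∑ j, m j * aseq (idx j.castSucc) + aseq (idx (Fin.last r)) ≠ 0 := by
  have hr : r ≤ 3 := by simpa using (card_le_sum_natAbs _ m fun j _ ↦ hm j).trans hw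
  interval_cases r
  · simpa using (aseq_pos _).ne'
  · simp only [Fin.sum_univ_one] at hw ⊢
    exact aseq_combination₂_ne_zero hone (hidx (by decide)) (hm 0) hw
  · simp only [Fin.sum_univ_two] at hw ⊢
    exact aseq_combination₃_ne_zero hone (hidx (by decide)) (hidx (by decide)) (hm 0) (hm 1) hw
  · simp only [Fin.sum_univ_three] at hw ⊢
    have h₀ := hm 0
    have h₁ := hm 1
    have h₂ := hm 2
    exact aseq_combination₄_ne_zero hone (hidx (by decide)) (hidx (by decide)) (hidx (by decide))
      (by omega) (by omega) (by omega)

lemma sum_mul_aseq_ne_zero {r : ℕ} (idx : Fin r → ℕ) (hidx : StrictMono idx)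
    (hone : ∀ j, 1 ≤ idx j) (m : Fin r → ℤ) (hm : ∀ j, m j ≠ 0) (hr : r ≠ 0)
    (hw : ∑ j, (m j).natAbs ≤ 4) : ∑ j, m j * aseq (idx j) ≠ 0 := by
  obtain ⟨r, rfl⟩ := Nat.exists_eq_add_one_of_ne_zero hr
  rw [Fin.sum_univ_castSucc] at hw ⊢
  have hm_top := hm (Fin.last r)
  have hw' : ∑ j : Fin r, (m j.castSucc).natAbs ≤ 3 := by omega
  rcases (show 2 ≤ (m (Fin.last r)).natAbs ∨ m (Fin.last r) = 1 ∨ m (Fin.last r) = -1 by omega)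
    with htop | htop | htop
  · exact sum_int_mul_add_int_mul_ne_zero_of_two_le_natAbs _ _ _ (aseq_pos _)
      (fun j _ ↦ ⟨(aseq_pos _).le, aseq_lt_aseq (hone _) (hidx (Fin.castSucc_lt_last j))⟩) htop hw
  · rw [htop, Int.cast_one, one_mul]
    exact sum_int_mul_aseq_add_aseq_ne_zero idx hidx (hone 0) _ (fun _ ↦ hm _) hw'
  · have := sum_int_mul_aseq_add_aseq_ne_zero idx hidx (hone 0) (fun j ↦ -m j.castSucc)
      (fun _ ↦ neg_ne_zero.mpr (hm _)) (by simpa using hw')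
    rw [htop, Int.cast_neg, Int.cast_one, neg_one_mul]
    contrapose! this
    simp only [Int.cast_neg, neg_mul, Finset.sum_neg_distrib]
    linarith

lemma sum_orderEmbOfFin {α M : Type*} [LinearOrder α] [AddCommMonoid M] (s : Finset α)
    (f : α → M) : ∑ j, f (s.orderEmbOfFin rfl j) = ∑ x ∈ s, f x := by
  conv_rhs => rw [← s.map_orderEmbOfFin_univ rfl, Finset.sum_map]
  rfl

theorem sum_int_mul_aseq_ne_zero {M : ℕ} (n : Fin M → ℤ) (hn : ∃ i, n i ≠ 0)
    (hw : ∑ i, (n i).natAbs ≤ 4) : ∑ i, (n i : ℝ) * aseq (i.1 + 1) ≠ 0 := by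
  classical
  set s := Finset.univ.filter fun i ↦ n i ≠ 0
  set e := s.orderEmbOfFin rfl
  obtain ⟨i₀, hi₀⟩ := hn
  rw [← Finset.sum_filter_of_ne (p := fun i ↦ n i ≠ 0) fun i _ h hi ↦ h (by simp [hi]),
    ← sum_orderEmbOfFin]
  refine sum_mul_aseq_ne_zero (fun j ↦ (e j).1 + 1) (fun a b h ↦ by simpa using e.strictMono h)
    (fun _ ↦ by omega) (fun j ↦ n (e j))
    (fun j ↦ (Finset.mem_filter.mp (s.orderEmbOfFin_mem rfl j)).2)
    (Finset.card_ne_zero.mpr ⟨i₀, by simp [s, hi₀]⟩) ?_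
  rw [sum_orderEmbOfFin s fun i ↦ (n i).natAbs]
  exact (Finset.sum_le_sum_of_subset (Finset.filter_subset _ _)).trans hw

/-- The sequence `(a_k)` is nonresonant up to order 4: no nontrivial integer
combination `∑ n_i a_i` with `∑ |n_i| ≤ 4` vanishes. In particular
`a_{k₂} ≠ 3a_{k₁}`, `a_{k₃} ≠ a_{k₂} + 2a_{k₁}`, `a_{k₃} ≠ 2a_{k₂} ± a_{k₁}`,
and `a_{k₄} ≠ a_{k₃} + a_{k₂} + a_{k₁}`. -/
theorem stmt16 :
    (∀ (M : ℕ) (n : Fin M → ℤ), (¬ ∀ i, n i = 0) →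
      (∑ i, (n i).natAbs) ≤ 4 →
      (∑ i, (n i : ℝ) * aseq (i.1 + 1)) ≠ 0) ∧
    (∀ k1 k2 : ℕ, 1 ≤ k1 → k1 < k2 → aseq k2 ≠ 3 * aseq k1) ∧
    (∀ k1 k2 k3 : ℕ, 1 ≤ k1 → k1 < k2 → k2 < k3 →
      aseq k3 ≠ aseq k2 + 2 * aseq k1 ∧
      aseq k3 ≠ 2 * aseq k2 + aseq k1 ∧
      aseq k3 ≠ 2 * aseq k2 - aseq k1) ∧
    (∀ k1 k2 k3 k4 : ℕ, 1 ≤ k1 → k1 < k2 → k2 < k3 → k3 < k4 →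
      aseq k4 ≠ aseq k3 + aseq k2 + aseq k1) := by
  refine ⟨fun _ n hn hw ↦ sum_int_mul_aseq_ne_zero n (not_forall.mp hn) hw,
    fun _ _ ↦ aseq_ne_three_mul, fun _ _ _ h₁ h₁₂ h₂₃ ↦ ?_, fun _ _ _ _ ↦ aseq_ne_add_add⟩
  exact ⟨aseq_ne_add_two_mul h₁ h₁₂ h₂₃, aseq_ne_two_mul_add h₁ h₁₂ h₂₃,
    aseq_ne_two_mul_sub h₁ h₁₂ h₂₃⟩
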